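/- Let v : [0,1] → ℝ be twice continuously differentiable and let ε ∈ (0, 1/2). Let π₁v be the affine function interpolating v at the points 1/2 and 1. Then for all x ∈ [0,1], |v(x) - (π₁v)(x)| ≤ C_ε · (∫_0^1 t^{3 - 2ε} |v''(t)|^2 dt)^{1/2}, assuming the weighted first-derivative estimate ∫_0^1 t^{1-2ε} |(v - π₁v)'(t)|^2 dt ≤ C'_ε ∫_0^1 t^{3-2ε} |v''(t)|^2 dt holds. -/

import Mathlib

/-!
The error `e = v - π₁v` vanishes at `1`, so `e x = -∫ₓ¹ e'`. Splitting
`|e'| = t^(ε-1/2) · t^(1/2-ε) |e'|` and applying Cauchy–Schwarz bounds `|e x|` by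
`(∫₀¹ t^(2ε-1))^(1/2) = (2ε)^(-1/2)` times the square root of the weighted first-derivative
integral, which the assumed estimate controls.
-/

open MeasureTheory Set Real

theorem integral_abs_le_sqrt_mul_sqrt_of_weight {α : Type*} [MeasurableSpace α] {μ : Measure α}
    {w g : α → ℝ} (hw_pos : ∀ᵐ a ∂μ, 0 < w a) (hw : AEMeasurable w μ)
    (hg : AEMeasurable g μ) (hw_inv : Integrable (fun a => (w a)⁻¹) μ)
    (hwg : Integrable (fun a => w a * g a ^ 2) μ) :
    ∫ a, |g a| ∂μ ≤ √(∫ a, (w a)⁻¹ ∂μ) * √(∫ a, w a * g a ^ 2 ∂μ) := by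
  -- Hölder with `p = q = 2` for `|g| = √(w⁻¹) · (√w |g|)`.
  have hsq_inv : ∀ᵐ a ∂μ, √((w a)⁻¹) ^ 2 = (w a)⁻¹ := by
    filter_upwards [hw_pos] with a ha using sq_sqrt (inv_nonneg.2 ha.le)
  have hsq_wg : ∀ᵐ a ∂μ, (√(w a) * |g a|) ^ 2 = w a * g a ^ 2 := by
    filter_upwards [hw_pos] with a ha
    rw [mul_pow, sq_sqrt ha.le, sq_abs]
  have hf₁ : MemLp (fun a => √((w a)⁻¹)) (ENNReal.ofReal 2) μ := by
    rw [ENNReal.ofReal_ofNat]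
    exact (memLp_two_iff_integrable_sq hw.inv.sqrt.aestronglyMeasurable).2
      (hw_inv.congr (hsq_inv.mono fun a h => h.symm))
  have hf₂ : MemLp (fun a => √(w a) * |g a|) (ENNReal.ofReal 2) μ := by
    rw [ENNReal.ofReal_ofNat]
    exact (memLp_two_iff_integrable_sq (hw.sqrt.mul hg.abs).aestronglyMeasurable).2
      (hwg.congr (hsq_wg.mono fun a h => h.symm))
  have holder := integral_mul_le_Lp_mul_Lq_of_nonneg Real.HolderConjugate.two_two
    (ae_of_all _ fun a => sqrt_nonneg _) (ae_of_all _ fun a => by positivity) hf₁ hf₂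
  simp only [rpow_two, ← sqrt_eq_rpow] at holder
  have hprod : ∀ᵐ a ∂μ, √((w a)⁻¹) * (√(w a) * |g a|) = |g a| := by
    filter_upwards [hw_pos] with a ha
    rw [sqrt_inv, ← mul_assoc, inv_mul_cancel₀ (sqrt_pos.2 ha).ne', one_mul]
  rwa [integral_congr_ae hprod, integral_congr_ae hsq_inv, integral_congr_ae hsq_wg] at holder

theorem intervalIntegral_abs_le_sqrt_mul_sqrt_of_rpow_weight {a b s : ℝ} {g : ℝ → ℝ}
    (ha : 0 ≤ a) (hab : a ≤ b) (hg : Measurable g)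
    (h_inv : IntervalIntegrable (fun t => t ^ (-s)) volume a b)
    (h_wg : IntervalIntegrable (fun t => t ^ s * g t ^ 2) volume a b) :
    ∫ t in a..b, |g t| ≤ √(∫ t in a..b, t ^ (-s)) * √(∫ t in a..b, t ^ s * g t ^ 2) := by
  have hpos : ∀ᵐ t ∂volume.restrict (Ioc a b), 0 < t := by
    filter_upwards [ae_restrict_mem measurableSet_Ioc] with t ht using ha.trans_lt ht.1
  have h_inv_eq : ∀ᵐ t ∂volume.restrict (Ioc a b), t ^ (-s) = (t ^ s)⁻¹ := by
    filter_upwards [hpos] with t ht using rpow_neg ht.le s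
  simp only [intervalIntegral.integral_of_le hab, integral_congr_ae h_inv_eq]
  exact integral_abs_le_sqrt_mul_sqrt_of_weight (hpos.mono fun t ht => rpow_pos_of_pos ht s)
    (measurable_id.pow_const s).aemeasurable hg.aemeasurable
    (h_inv.1.congr h_inv_eq) h_wg.1

theorem deriv_ae_eq_derivWithin_Icc (f : ℝ → ℝ) (a b : ℝ) :
    deriv f =ᵐ[volume.restrict (Ioc a b)] derivWithin f (Icc a b) := by
  rw [← restrict_Ioo_eq_restrict_Ioc]
  filter_upwards [ae_restrict_mem measurableSet_Ioo] with t ht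
  exact (derivWithin_of_mem_nhds (Icc_mem_nhds ht.1 ht.2)).symm

theorem intervalIntegrable_mul_deriv_sq {f w : ℝ → ℝ} {a b : ℝ} (hab : a ≤ b)
    (hf : ContDiffOn ℝ 1 f (Icc a b)) (hw : ContinuousOn w (Icc a b)) :
    IntervalIntegrable (fun t => w t * deriv f t ^ 2) volume a b := by
  rcases hab.eq_or_lt with rfl | hlt
  · exact IntervalIntegrable.refl
  have hcont : ContinuousOn (fun t => w t * derivWithin f (Icc a b) t ^ 2) (Icc a b) :=
    hw.mul ((hf.continuousOn_derivWithin (uniqueDiffOn_Icc hlt) le_rfl).pow 2)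
  refine (hcont.intervalIntegrable_of_Icc hab).congr_ae ?_
  rw [uIoc_of_le hab]
  filter_upwards [deriv_ae_eq_derivWithin_Icc f a b] with t ht
  rw [ht]

theorem integral_rpow_le_one_div_add_one {x r : ℝ} (hx₀ : 0 ≤ x) (hx₁ : x ≤ 1) (hr : -1 < r) :
    ∫ t in x..1, t ^ r ≤ 1 / (r + 1) := calc
  ∫ t in x..1, t ^ r ≤ ∫ t in (0 : ℝ)..1, t ^ r := by
    refine intervalIntegral.integral_mono_interval hx₀ hx₁ le_rfl ?_
      (intervalIntegral.intervalIntegrable_rpow' hr)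
    filter_upwards [ae_restrict_mem measurableSet_Ioc] with t ht using rpow_nonneg ht.1.le r
  _ = 1 / (r + 1) := by
    rw [integral_rpow (Or.inl hr), one_rpow, zero_rpow (by linarith : r + 1 ≠ 0), sub_zero]

noncomputable def linInterpHalfOne (v : ℝ → ℝ) (x : ℝ) : ℝ :=
  v (1 / 2) + 2 * (v 1 - v (1 / 2)) * (x - 1 / 2)

theorem linInterpHalfOne_one (v : ℝ → ℝ) : linInterpHalfOne v 1 = v 1 := by
  unfold linInterpHalfOne; ring

theorem contDiff_linInterpHalfOne (v : ℝ → ℝ) : ContDiff ℝ 1 (linInterpHalfOne v) := by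
  unfold linInterpHalfOne; fun_prop

/-- Maximum norm estimate for the error of linear interpolation at `1/2` and `1`,
given the weighted first-derivative estimate. -/
theorem max_norm_interp_error (ε C' : ℝ) (hε : 0 < ε) (hε2 : ε < 1 / 2) (hC' : 0 < C') :
    ∃ C > (0 : ℝ), ∀ v : ℝ → ℝ, ContDiffOn ℝ 2 v (Set.Icc 0 1) →
      (∫ t in (0 : ℝ)..1, t ^ (1 - 2 * ε) *
          (deriv (fun x => v x - (v (1 / 2) + 2 * (v 1 - v (1 / 2)) * (x - 1 / 2))) t) ^ 2)
        ≤ C' * ∫ t in (0 : ℝ)..1, t ^ (3 - 2 * ε) * (deriv (deriv v) t) ^ 2 →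
      ∀ x ∈ Set.Icc (0 : ℝ) 1,
        |v x - (v (1 / 2) + 2 * (v 1 - v (1 / 2)) * (x - 1 / 2))| ≤
          C * (∫ t in (0 : ℝ)..1, t ^ (3 - 2 * ε) * (deriv (deriv v) t) ^ 2) ^ ((1 : ℝ) / 2) := by
  refine ⟨√(1 / (2 * ε)) * √C', by positivity, fun v hv h_deriv x hx => ?_⟩
  set e : ℝ → ℝ := fun x => v x - linInterpHalfOne v x
  set I := ∫ t in (0 : ℝ)..1, t ^ (3 - 2 * ε) * deriv (deriv v) t ^ 2
  have he : ContDiffOn ℝ 1 e (Icc 0 1) :=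
    (hv.of_le one_le_two).sub (contDiff_linInterpHalfOne v).contDiffOn
  have he_one : e 1 = 0 := by simp only [e, linInterpHalfOne_one, sub_self]
  have hw : ContinuousOn (fun t : ℝ => t ^ (1 - 2 * ε)) (Icc 0 1) :=
    (continuous_rpow_const (by linarith)).continuousOn
  have hsub : Icc x 1 ⊆ Icc 0 1 := Icc_subset_Icc_left hx.1
  have h_weighted : ∫ t in x..1, t ^ (1 - 2 * ε) * deriv e t ^ 2 ≤ C' * I :=
    (intervalIntegral.integral_mono_interval hx.1 hx.2 le_rfl
      (by filter_upwards [ae_restrict_mem measurableSet_Ioc] with t ht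
          using mul_nonneg (rpow_nonneg ht.1.le _) (sq_nonneg _))
      (intervalIntegrable_mul_deriv_sq zero_le_one he hw)).trans h_deriv
  calc |e x| = |∫ t in x..1, deriv e t| := by
        rw [intervalIntegral.integral_deriv_of_contDiffOn_Icc (he.mono hsub) hx.2, he_one,
          zero_sub, abs_neg]
    _ ≤ ∫ t in x..1, |deriv e t| := intervalIntegral.abs_integral_le_integral_abs hx.2
    _ ≤ √(∫ t in x..1, t ^ (-(1 - 2 * ε))) * √(∫ t in x..1, t ^ (1 - 2 * ε) * deriv e t ^ 2) :=
        intervalIntegral_abs_le_sqrt_mul_sqrt_of_rpow_weight hx.1 hx.2 (measurable_deriv e)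
          (intervalIntegral.intervalIntegrable_rpow' (by linarith))
          (intervalIntegrable_mul_deriv_sq hx.2 (he.mono hsub) (hw.mono hsub))
    _ ≤ √(1 / (2 * ε)) * √(C' * I) := by
        gcongr
        simpa only [neg_sub, sub_add_cancel] using
          integral_rpow_le_one_div_add_one hx.1 hx.2 (by linarith : -1 < 2 * ε - 1)
    _ = √(1 / (2 * ε)) * √C' * I ^ ((1 : ℝ) / 2) := by
        rw [sqrt_mul hC'.le, sqrt_eq_rpow I, mul_assoc]
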